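/- arXiv:1008.2368 — 2 statements merged into one kernel-verified Lean document; each statement's English description precedes it below -/
import Mathlib

section
/- Let K = x⁴ + y⁴ + z⁴ + x²y² + y²z² + z²x² + x²yz + xy²z + xyz² ∈ F_4[x,y,z]. Then the set of F_4-rational points of the plane curve K = 0 is exactly P²(F_4) ∖ P²(F_2), the set of points of P²(F_4) that admit no representative with all coordinates in F_2; in particular this curve has exactly 14 points in P²(F_4). Consequently, every F_4-rational line of P² meets this curve in at least one F_4-rational point. -/
open MvPolynomial

noncomputable section

/-- The exceptional quartic `K` of Homma--Kim:
`x⁴ + y⁴ + z⁴ + x²y² + y²z² + z²x² + x²yz + xy²z + xyz²`. -/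
def hommaKimQuartic (F : Type) [Field F] : MvPolynomial (Fin 3) F :=
  X 0 ^ 4 + X 1 ^ 4 + X 2 ^ 4 + X 0 ^ 2 * X 1 ^ 2 + X 1 ^ 2 * X 2 ^ 2 + X 2 ^ 2 * X 0 ^ 2
    + X 0 ^ 2 * X 1 * X 2 + X 0 * X 1 ^ 2 * X 2 + X 0 * X 1 * X 2 ^ 2

namespace HK
set_option linter.unusedSectionVars false
variable {F : Type} [Field F] [Fintype F]

def kk (a b c : F) : F :=
  a ^ 4 + b ^ 4 + c ^ 4 + a ^ 2 * b ^ 2 + b ^ 2 * c ^ 2 + c ^ 2 * a ^ 2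
    + a ^ 2 * b * c + a * b ^ 2 * c + a * b * c ^ 2

lemma two_eq_zero (hF : Fintype.card F = 4) : (2 : F) = 0 := by
  have h4 : (4 : F) = 0 := by
    have := FiniteField.cast_card_eq_zero F
    rw [hF] at this; exact_mod_cast this
  have h : (2 : F) * 2 = 0 := by linear_combination h4
  exact mul_self_eq_zero.mp h

lemma pow4' (hF : Fintype.card F = 4) (a : F) : a ^ 4 = a := by
  have := FiniteField.pow_card a; rwa [hF] at this

lemma f2_mem (a : F) : a ^ 2 = a ↔ (a = 0 ∨ a = 1) := by
  constructor
  · intro h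
    have h' : a * (a - 1) = 0 := by linear_combination h
    rcases mul_eq_zero.mp h' with h'' | h''
    · exact Or.inl h''
    · exact Or.inr (by linear_combination h'')
  · rintro (rfl | rfl) <;> norm_num

lemma tricho (hF : Fintype.card F = 4) (a : F) : a = 0 ∨ a = 1 ∨ a ^ 2 + a + 1 = 0 := by
  have h : a * (a - 1) * (a ^ 2 + a + 1) = 0 := by linear_combination pow4' hF a
  rcases mul_eq_zero.mp h with h' | h'
  · rcases mul_eq_zero.mp h' with h'' | h''
    · exact Or.inl h''
    · exact Or.inr (Or.inl (by linear_combination h''))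
  · exact Or.inr (Or.inr h')

lemma f2_iff (hF : Fintype.card F = 4) (a : F) : a ^ 2 = a ↔ a ^ 2 + a + 1 ≠ 0 := by
  constructor
  · intro h hq
    rcases (f2_mem a).mp h with rfl | rfl
    · simp at hq
    · have h1 : (1 : F) = 0 := by linear_combination hq - two_eq_zero hF
      exact one_ne_zero h1
  · intro h
    rcases tricho hF a with rfl | rfl | hq
    · norm_num
    · norm_num
    · exact absurd hq h

lemma kk_smul (l a b c : F) : kk (l * a) (l * b) (l * c) = l ^ 4 * kk a b c := by
  simp only [kk]; ring

lemma kk_norm1 (hF : Fintype.card F = 4) (b c : F) :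
    kk 1 b c = (b ^ 2 + b + 1) * (c ^ 2 + c + 1) := by
  simp only [kk]; linear_combination pow4' hF b + pow4' hF c

lemma kk_norm2 (hF : Fintype.card F = 4) (c : F) : kk 0 1 c = c ^ 2 + c + 1 := by
  simp only [kk]; linear_combination pow4' hF c

lemma kk_norm3 (c : F) : kk 0 0 c = c ^ 4 := by simp only [kk]; ring

/-- an idempotent nonzero element is 1 -/
lemma idem_eq_one {a : F} (h : a ^ 2 = a) (ha : a ≠ 0) : a = 1 := by
  rcases (f2_mem a).mp h with rfl | rfl
  · exact absurd rfl ha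
  · rfl

lemma core (hF : Fintype.card F = 4) (v : Fin 3 → F) (hv : v ≠ 0) :
    kk (v 0) (v 1) (v 2) = 0 ↔
      ¬ ∃ l : F, l ≠ 0 ∧ ∀ i, (l * v i) ^ 2 = l * v i := by
  rcases ne_or_eq (v 0) 0 with h0 | h0
  · -- pivot at coordinate 0
    set u := (v 0)⁻¹ with hu_def
    have hu : u ≠ 0 := inv_ne_zero h0
    have hu0 : u * v 0 = 1 := inv_mul_cancel₀ h0
    have hk : kk (v 0) (v 1) (v 2) = 0 ↔
        ((u * v 1) ^ 2 + (u * v 1) + 1) * ((u * v 2) ^ 2 + (u * v 2) + 1) = 0 := by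
      rw [← kk_norm1 hF, ← hu0, kk_smul]
      constructor
      · intro h; rw [h, mul_zero]
      · intro h
        rcases mul_eq_zero.mp h with h' | h'
        · exact absurd h' (pow_ne_zero _ hu)
        · exact h'
    rw [hk]
    constructor
    · rintro h ⟨l, hl, hf⟩
      have hl0 : l * v 0 = 1 := idem_eq_one (hf 0) (mul_ne_zero hl h0)
      have hlu : l = u := eq_inv_of_mul_eq_one_left hl0
      rcases mul_eq_zero.mp h with h' | h'
      · exact (f2_iff hF _).mp (by rw [← hlu]; exact hf 1) h'
      · exact (f2_iff hF _).mp (by rw [← hlu]; exact hf 2) h'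
    · intro h
      by_contra h'
      apply h
      refine ⟨u, hu, fun i => ?_⟩
      fin_cases i
      · show (u * v 0) ^ 2 = u * v 0
        rw [hu0]; norm_num
      · show (u * v 1) ^ 2 = u * v 1
        exact (f2_iff hF _).mpr fun hq => h' (by rw [hq, zero_mul])
      · show (u * v 2) ^ 2 = u * v 2
        exact (f2_iff hF _).mpr fun hq => h' (by rw [hq, mul_zero])
  rcases ne_or_eq (v 1) 0 with h1 | h1
  · -- v 0 = 0, pivot at coordinate 1
    set u := (v 1)⁻¹ with hu_def
    have hu : u ≠ 0 := inv_ne_zero h1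
    have hu1 : u * v 1 = 1 := inv_mul_cancel₀ h1
    have hk : kk (v 0) (v 1) (v 2) = 0 ↔
        ((u * v 2) ^ 2 + (u * v 2) + 1) = 0 := by
      rw [h0, ← kk_norm2 hF]
      have hs : kk (u * 0) (u * v 1) (u * v 2) = u ^ 4 * kk 0 (v 1) (v 2) :=
        kk_smul u 0 (v 1) (v 2)
      rw [mul_zero, hu1] at hs
      rw [hs]
      constructor
      · intro h; rw [h, mul_zero]
      · intro h
        rcases mul_eq_zero.mp h with h' | h'
        · exact absurd h' (pow_ne_zero _ hu)
        · exact h'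
    rw [hk]
    constructor
    · rintro h ⟨l, hl, hf⟩
      have hl1 : l * v 1 = 1 := idem_eq_one (hf 1) (mul_ne_zero hl h1)
      have hlu : l = u := eq_inv_of_mul_eq_one_left hl1
      exact (f2_iff hF _).mp (by rw [← hlu]; exact hf 2) h
    · intro h
      by_contra h'
      apply h
      refine ⟨u, hu, fun i => ?_⟩
      fin_cases i
      · show (u * v 0) ^ 2 = u * v 0
        rw [h0, mul_zero]; norm_num
      · show (u * v 1) ^ 2 = u * v 1
        rw [hu1]; norm_num
      · show (u * v 2) ^ 2 = u * v 2
        exact (f2_iff hF _).mpr h'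
  · -- v 0 = v 1 = 0, pivot at coordinate 2
    have h2 : v 2 ≠ 0 := by
      intro h2
      exact hv (funext fun i => by fin_cases i <;> simp [h0, h1, h2])
    have hk : kk (v 0) (v 1) (v 2) ≠ 0 := by
      rw [h0, h1, kk_norm3]
      exact pow_ne_zero _ h2
    constructor
    · intro h; exact absurd h hk
    · intro h
      exfalso; apply h
      refine ⟨(v 2)⁻¹, inv_ne_zero h2, fun i => ?_⟩
      fin_cases i
      · show ((v 2)⁻¹ * v 0) ^ 2 = (v 2)⁻¹ * v 0
        rw [h0, mul_zero]; norm_num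
      · show ((v 2)⁻¹ * v 1) ^ 2 = (v 2)⁻¹ * v 1
        rw [h1, mul_zero]; norm_num
      · show ((v 2)⁻¹ * v 2) ^ 2 = (v 2)⁻¹ * v 2
        rw [inv_mul_cancel₀ h2]; norm_num


lemma keval (v : Fin 3 → F) : eval v (hommaKimQuartic F) = kk (v 0) (v 1) (v 2) := by
  simp [hommaKimQuartic, kk]

open Projectivization in
lemma exists_rep_iff (x : Projectivization F (Fin 3 → F)) :
    (∃ (v : Fin 3 → F) (hv : v ≠ 0),
        Projectivization.mk F v hv = x ∧ ∀ i, v i ^ 2 = v i) ↔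
      ∃ l : F, l ≠ 0 ∧ ∀ i, (l * x.rep i) ^ 2 = l * x.rep i := by
  constructor
  · rintro ⟨v, hv, hmk, hf⟩
    rw [← Projectivization.mk_rep x] at hmk
    obtain ⟨a, ha⟩ := (Projectivization.mk_eq_mk_iff F v x.rep hv x.rep_nonzero).mp hmk
    refine ⟨(a : F), a.ne_zero, fun i => ?_⟩
    have h : (a : F) * x.rep i = v i := by rw [← ha]; simp [Units.smul_def]
    rw [h]; exact hf i
  · rintro ⟨l, hl, hf⟩
    refine ⟨l • x.rep, smul_ne_zero hl x.rep_nonzero, ?_, fun i => by simpa using hf i⟩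
    conv_rhs => rw [← Projectivization.mk_rep x]
    exact (Projectivization.mk_eq_mk_iff' F _ _ (smul_ne_zero hl x.rep_nonzero)
      x.rep_nonzero).mpr ⟨l, rfl⟩

lemma part1 (hF : Fintype.card F = 4) :
    {x : Projectivization F (Fin 3 → F) | MvPolynomial.eval x.rep (hommaKimQuartic F) = 0}
      = {x : Projectivization F (Fin 3 → F) |
          ¬ ∃ (v : Fin 3 → F) (hv : v ≠ 0),
              Projectivization.mk F v hv = x ∧ ∀ i, v i ^ 2 = v i} := by
  ext x
  simp only [Set.mem_setOf_eq]
  rw [keval, core hF x.rep x.rep_nonzero]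
  exact not_congr (exists_rep_iff x).symm


lemma exists_omega (hF : Fintype.card F = 4) : ∃ w : F, w ^ 2 + w + 1 = 0 := by
  classical
  have h : ∃ a : F, a ≠ 0 ∧ a ≠ 1 := by
    by_contra h
    push_neg at h
    have hsub : (Finset.univ : Finset F) ⊆ {0, 1} := by
      intro a _
      rcases eq_or_ne a 0 with rfl | ha
      · simp
      · simp [h a ha]
    have hle := Finset.card_le_card hsub
    have h2 : ({0, 1} : Finset F).card ≤ 2 :=
      (Finset.card_insert_le _ _).trans (by simp)
    rw [Finset.card_univ, hF] at hle
    omega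
  obtain ⟨a, ha0, ha1⟩ := h
  rcases tricho hF a with rfl | rfl | hq
  · exact absurd rfl ha0
  · exact absurd rfl ha1
  · exact ⟨a, hq⟩

lemma omega_sq_ne (hF : Fintype.card F = 4) {w : F} (hw : w ^ 2 + w + 1 = 0) :
    ¬ w ^ 2 = w := fun h => (f2_iff hF w).mp h hw

lemma omega1_sq_ne (hF : Fintype.card F = 4) {w : F} (hw : w ^ 2 + w + 1 = 0) :
    ¬ (w + 1) ^ 2 = w + 1 := by
  have h : (w + 1) ^ 2 + (w + 1) + 1 = 0 := by
    linear_combination hw + (w + 1) * two_eq_zero hF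
  exact fun h' => (f2_iff hF _).mp h' h

lemma omega_ne (hF : Fintype.card F = 4) {w : F} (hw : w ^ 2 + w + 1 = 0) :
    w ≠ w + 1 := by
  intro h
  have h1 : (1 : F) = 0 := by linear_combination -h
  exact one_ne_zero h1

lemma nonf2_eq (hF : Fintype.card F = 4) {w : F} (hw : w ^ 2 + w + 1 = 0) {a : F}
    (h : ¬ a ^ 2 = a) : a = w ∨ a = w + 1 := by
  rcases tricho hF a with rfl | rfl | hq
  · exact absurd (by norm_num) h
  · exact absurd (by norm_num) h
  · have hz : (a - w) * (a - (w + 1)) = 0 := by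
      linear_combination hq - hw + (w ^ 2 + w - a * w - a) * two_eq_zero hF
    rcases mul_eq_zero.mp hz with h' | h'
    · exact Or.inl (by linear_combination h')
    · exact Or.inr (by linear_combination h')

lemma vec1_ne_zero (b c : F) : ![(1 : F), b, c] ≠ 0 := by
  intro h
  have h0 := congrFun h 0
  simp at h0

lemma vec2_ne_zero (c : F) : ![(0 : F), 1, c] ≠ 0 := by
  intro h
  have h0 := congrFun h 1
  simp at h0

lemma rep_eq (v : Fin 3 → F) (hv : v ≠ 0) :
    ∃ a : Fˣ, ∀ i, (Projectivization.mk F v hv).rep i = (a : F) * v i := by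
  obtain ⟨a, ha⟩ := Projectivization.exists_smul_eq_mk_rep F v hv
  exact ⟨a, fun i => by rw [← ha]; simp [Units.smul_def]⟩

lemma part2 (hF : Fintype.card F = 4) :
    {x : Projectivization F (Fin 3 → F) |
        MvPolynomial.eval x.rep (hommaKimQuartic F) = 0}.ncard = 14 := by
  classical
  obtain ⟨w, hw⟩ := exists_omega hF
  set A : Set (Projectivization F (Fin 3 → F)) :=
    (fun p : F × F => Projectivization.mk F ![1, p.1, p.2] (vec1_ne_zero p.1 p.2)) ''
      {p : F × F | ¬ (p.1 ^ 2 = p.1 ∧ p.2 ^ 2 = p.2)} with hA_def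
  set B : Set (Projectivization F (Fin 3 → F)) :=
    (fun c : F => Projectivization.mk F ![0, 1, c] (vec2_ne_zero c)) ''
      {c : F | ¬ c ^ 2 = c} with hB_def
  have hS : {x : Projectivization F (Fin 3 → F) |
      MvPolynomial.eval x.rep (hommaKimQuartic F) = 0} = A ∪ B := by
    ext x
    simp only [hA_def, hB_def, Set.mem_setOf_eq, Set.mem_union, Set.mem_image]
    rw [keval]
    constructor
    · intro hx
      have hrnz := x.rep_nonzero
      rcases ne_or_eq (x.rep 0) 0 with h0 | h0
      · left
        set u := (x.rep 0)⁻¹ with hu_def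
        have hu : u ≠ 0 := inv_ne_zero h0
        have hu0 : u * x.rep 0 = 1 := inv_mul_cancel₀ h0
        refine ⟨(u * x.rep 1, u * x.rep 2), ?_, ?_⟩
        · rintro ⟨hb, hc⟩
          have hs : kk (u * x.rep 0) (u * x.rep 1) (u * x.rep 2)
              = u ^ 4 * kk (x.rep 0) (x.rep 1) (x.rep 2) := kk_smul _ _ _ _
          rw [hu0, kk_norm1 hF, hx, mul_zero] at hs
          rcases mul_eq_zero.mp hs with h' | h'
          · exact (f2_iff hF _).mp hb h'
          · exact (f2_iff hF _).mp hc h'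
        · conv_rhs => rw [← Projectivization.mk_rep x]
          apply (Projectivization.mk_eq_mk_iff' F _ _ _ x.rep_nonzero).mpr
          exact ⟨u, by funext i; fin_cases i <;> simp [hu0]⟩
      · rcases ne_or_eq (x.rep 1) 0 with h1 | h1
        · right
          set u := (x.rep 1)⁻¹ with hu_def
          have hu : u ≠ 0 := inv_ne_zero h1
          have hu1 : u * x.rep 1 = 1 := inv_mul_cancel₀ h1
          refine ⟨u * x.rep 2, ?_, ?_⟩
          · intro hc
            have hs : kk (u * x.rep 0) (u * x.rep 1) (u * x.rep 2)
                = u ^ 4 * kk (x.rep 0) (x.rep 1) (x.rep 2) := kk_smul _ _ _ _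
            rw [h0] at hx
            rw [h0, mul_zero, hu1, kk_norm2 hF, hx, mul_zero] at hs
            exact (f2_iff hF _).mp hc hs
          · conv_rhs => rw [← Projectivization.mk_rep x]
            apply (Projectivization.mk_eq_mk_iff' F _ _ _ x.rep_nonzero).mpr
            exact ⟨u, by funext i; fin_cases i <;> simp [hu1, h0]⟩
        · exfalso
          have h2 : x.rep 2 ≠ 0 := by
            intro h2
            exact hrnz (funext fun i => by fin_cases i <;> simp [h0, h1, h2])
          rw [h0, h1, kk_norm3] at hx
          exact pow_ne_zero _ h2 hx
    · rintro (⟨⟨b, c⟩, hp, rfl⟩ | ⟨c, hc, rfl⟩)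
      · obtain ⟨a, ha⟩ := rep_eq ![(1 : F), b, c] (vec1_ne_zero b c)
        rw [ha 0, ha 1, ha 2]
        show kk ((a : F) * 1) ((a : F) * b) ((a : F) * c) = 0
        rw [kk_smul, kk_norm1 hF]
        rcases not_and_or.mp hp with hb | hb
        · have hq : b ^ 2 + b + 1 = 0 := by
            by_contra hq; exact hb ((f2_iff hF b).mpr hq)
          rw [hq]; ring
        · have hq : c ^ 2 + c + 1 = 0 := by
            by_contra hq; exact hb ((f2_iff hF c).mpr hq)
          rw [hq]; ring
      · obtain ⟨a, ha⟩ := rep_eq ![(0 : F), 1, c] (vec2_ne_zero c)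
        rw [ha 0, ha 1, ha 2]
        show kk ((a : F) * 0) ((a : F) * 1) ((a : F) * c) = 0
        rw [kk_smul, kk_norm2 hF]
        have hq : c ^ 2 + c + 1 = 0 := by
          by_contra hq; exact hc ((f2_iff hF c).mpr hq)
        rw [hq]; ring
  have hinjA : Set.InjOn
      (fun p : F × F => Projectivization.mk F ![1, p.1, p.2] (vec1_ne_zero p.1 p.2))
      {p : F × F | ¬ (p.1 ^ 2 = p.1 ∧ p.2 ^ 2 = p.2)} := by
    rintro ⟨b, c⟩ - ⟨b', c'⟩ - h
    obtain ⟨a, ha⟩ := (Projectivization.mk_eq_mk_iff F _ _ _ _).mp h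
    have h0 := congrFun ha 0
    have h1 := congrFun ha 1
    have h2 := congrFun ha 2
    simp [Units.smul_def] at h0 h1 h2
    simp only [h0, Units.val_one, one_mul] at h1 h2
    exact Prod.ext h1.symm h2.symm
  have hinjB : Set.InjOn
      (fun c : F => Projectivization.mk F ![0, 1, c] (vec2_ne_zero c))
      {c : F | ¬ c ^ 2 = c} := by
    rintro c - c' - h
    obtain ⟨a, ha⟩ := (Projectivization.mk_eq_mk_iff F _ _ _ _).mp h
    have h1 := congrFun ha 1
    have h2 := congrFun ha 2
    simp [Units.smul_def] at h1 h2
    simp only [h1, Units.val_one, one_mul] at h2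
    exact h2.symm
  have hdisj : Disjoint A B := by
    rw [Set.disjoint_left]
    rintro x ⟨⟨b, c⟩, -, rfl⟩ ⟨c', -, heq⟩
    obtain ⟨a, ha⟩ := (Projectivization.mk_eq_mk_iff F _ _ _ _).mp heq
    have h0 := congrFun ha 0
    simp [Units.smul_def] at h0
  have hsetA : {p : F × F | ¬ (p.1 ^ 2 = p.1 ∧ p.2 ^ 2 = p.2)}
      = ({((0 : F), (0 : F)), (0, 1), (1, 0), (1, 1)} : Set (F × F))ᶜ := by
    ext ⟨a, b⟩
    simp only [Set.mem_setOf_eq, Set.mem_compl_iff, Set.mem_insert_iff,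
      Set.mem_singleton_iff, Prod.mk.injEq]
    rw [f2_mem, f2_mem]
    tauto
  have h4 : ({((0 : F), (0 : F)), (0, 1), (1, 0), (1, 1)} : Set (F × F)).ncard = 4 := by
    rw [Set.ncard_insert_of_notMem (by simp [Prod.ext_iff]),
      Set.ncard_insert_of_notMem (by simp [Prod.ext_iff]),
      Set.ncard_insert_of_notMem (by simp [Prod.ext_iff]), Set.ncard_singleton]
  have hcardA : A.ncard = 12 := by
    rw [hA_def, Set.ncard_image_of_injOn hinjA, hsetA]
    have hc := Set.ncard_add_ncard_compl
      ({((0 : F), (0 : F)), (0, 1), (1, 0), (1, 1)} : Set (F × F))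
    rw [h4, Nat.card_eq_fintype_card, Fintype.card_prod, hF] at hc
    omega
  have hsetB : {c : F | ¬ c ^ 2 = c} = {w, w + 1} := by
    ext a
    simp only [Set.mem_setOf_eq, Set.mem_insert_iff, Set.mem_singleton_iff]
    constructor
    · exact nonf2_eq hF hw
    · rintro (rfl | rfl)
      · exact omega_sq_ne hF hw
      · exact omega1_sq_ne hF hw
  have hcardB : B.ncard = 2 := by
    rw [hB_def, Set.ncard_image_of_injOn hinjB, hsetB,
      Set.ncard_pair (omega_ne hF hw)]
  rw [hS, Set.ncard_union_eq hdisj (Set.toFinite A) (Set.toFinite B), hcardA, hcardB]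

lemma line_point (hF : Fintype.card F = 4) (b v : Fin 3 → F) (hv : v ≠ 0)
    (hsum : b 0 * v 0 + b 1 * v 1 + b 2 * v 2 = 0)
    (hnf : ¬ ∃ l : F, l ≠ 0 ∧ ∀ i, (l * v i) ^ 2 = l * v i) :
    ∃ x : Projectivization F (Fin 3 → F),
      (∑ i, b i * x.rep i) = 0 ∧ MvPolynomial.eval x.rep (hommaKimQuartic F) = 0 := by
  obtain ⟨a, ha⟩ := rep_eq v hv
  refine ⟨Projectivization.mk F v hv, ?_, ?_⟩
  · rw [Fin.sum_univ_three, ha 0, ha 1, ha 2]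
    linear_combination (a : F) * hsum
  · rw [keval, ha 0, ha 1, ha 2, kk_smul, (core hF v hv).mpr hnf, mul_zero]

lemma part3 (hF : Fintype.card F = 4) :
    ∀ b : Fin 3 → F, b ≠ 0 →
      ∃ x : Projectivization F (Fin 3 → F),
        (∑ i, b i * x.rep i) = 0 ∧ MvPolynomial.eval x.rep (hommaKimQuartic F) = 0 := by
  obtain ⟨w, hw⟩ := exists_omega hF
  have h2 := two_eq_zero hF
  intro b hb
  rcases ne_or_eq (b 0) 0 with hb0 | hb0
  · refine line_point hF b ![b 1 + b 2 * w, b 0, b 0 * w]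
      (fun h => hb0 (by have := congrFun h 1; simpa using this)) ?_ ?_
    · show b 0 * (b 1 + b 2 * w) + b 1 * b 0 + b 2 * (b 0 * w) = 0
      linear_combination (b 0 * b 1 + b 0 * b 2 * w) * h2
    · rintro ⟨l, hl, hf⟩
      have h1 : (l * b 0) ^ 2 = l * b 0 := hf 1
      have hl1 : l * b 0 = 1 := idem_eq_one h1 (mul_ne_zero hl hb0)
      have h2' : (l * (b 0 * w)) ^ 2 = l * (b 0 * w) := hf 2
      rw [← mul_assoc, hl1, one_mul] at h2'
      exact omega_sq_ne hF hw h2'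
  · rcases ne_or_eq (b 1) 0 with hb1 | hb1
    · refine line_point hF b ![b 1, b 2 * w, b 1 * w]
        (fun h => hb1 (by have := congrFun h 0; simpa using this)) ?_ ?_
      · show b 0 * b 1 + b 1 * (b 2 * w) + b 2 * (b 1 * w) = 0
        linear_combination b 1 * hb0 + (b 1 * b 2 * w) * h2
      · rintro ⟨l, hl, hf⟩
        have h1 : (l * b 1) ^ 2 = l * b 1 := hf 0
        have hl1 : l * b 1 = 1 := idem_eq_one h1 (mul_ne_zero hl hb1)
        have h2' : (l * (b 1 * w)) ^ 2 = l * (b 1 * w) := hf 2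
        rw [← mul_assoc, hl1, one_mul] at h2'
        exact omega_sq_ne hF hw h2'
    · have hb2 : b 2 ≠ 0 := by
        intro h
        exact hb (funext fun i => by fin_cases i <;> simp [hb0, hb1, h])
      refine line_point hF b ![1, w, 0] (vec1_ne_zero w 0) ?_ ?_
      · show b 0 * 1 + b 1 * w + b 2 * 0 = 0
        linear_combination hb0 + w * hb1
      · rintro ⟨l, hl, hf⟩
        have h1 : (l * 1) ^ 2 = l * 1 := hf 0
        rw [mul_one] at h1
        have hl1 : l = 1 := idem_eq_one h1 hl
        have h2' : (l * w) ^ 2 = l * w := hf 1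
        rw [hl1, one_mul] at h2'
        exact omega_sq_ne hF hw h2'

end HK

/-- Over `F_4`, the set of rational points of the curve `K = 0` is exactly
`P²(F_4) ∖ P²(F_2)` (the points with no representative all of whose coordinates lie in the
prime subfield `F_2 = {x | x² = x}`); in particular it has exactly `14` points, and every
`F_4`-rational line meets the curve in at least one `F_4`-rational point. -/
theorem stmt_2 (F : Type) [Field F] [Fintype F] (hF : Fintype.card F = 4) :
    {x : Projectivization F (Fin 3 → F) | MvPolynomial.eval x.rep (hommaKimQuartic F) = 0}
      = {x : Projectivization F (Fin 3 → F) |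
          ¬ ∃ (v : Fin 3 → F) (hv : v ≠ 0),
              Projectivization.mk F v hv = x ∧ ∀ i, v i ^ 2 = v i} ∧
    {x : Projectivization F (Fin 3 → F) |
        MvPolynomial.eval x.rep (hommaKimQuartic F) = 0}.ncard = 14 ∧
    (∀ b : Fin 3 → F, b ≠ 0 →
      ∃ x : Projectivization F (Fin 3 → F),
        (∑ i, b i * x.rep i) = 0 ∧ MvPolynomial.eval x.rep (hommaKimQuartic F) = 0) :=
  ⟨HK.part1 hF, HK.part2 hF, HK.part3 hF⟩
end
end

section
/- Let q be a prime power with q ≥ 4 and let P be a closed point of degree 3 of P² over F_q not contained in any F_q-rational line, given by a point p ∈ P²(F_{q³}) whose Frobenius orbit {p, φ(p), φ²(p)} has exactly 3 elements, these three points being non-collinear. Then for every nonzero homogeneous polynomial f ∈ F_q[x,y,z] of degree 4 vanishing at p, the number of points [a:b:c] ∈ P²(F_q) with f(a,b,c) = 0 is at most 3q + 2. -/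
/-!
A rational linear form cannot vanish at `v`: it would also vanish at the Frobenius conjugates of
`v`, which span `E³`. So the quartic has at most two rational lines as components, and what is
left after removing them still passes through `v` and contains no rational line.

A curve of degree `d` containing no rational line has at most `(d - 1)(q + 1)` rational points:
each of the `q + 1` lines through one of its points `x` meets it in at most `d - 1` further
points, and the tangent at `x` in at most `d - 2`. For `d ≥ 3` the bound is never attained:
equality would force the tangent at `x` to meet the curve transversally at some `y`, and counting
from `y` instead, both the tangent at `y` and the line `yx`, which is tangent at `x`, carry at
most `d - 2` further points. The three cases (a quartic, a line and a cubic, two meeting lines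
and a conic) each give at most `3q + 2` points.
-/

open scoped Polynomial

theorem Polynomial.card_roots_toFinset_lt_natDegree {R : Type*} [CommRing R] [IsDomain R]
    [DecidableEq R] {p : R[X]} (hp : p ≠ 0) {a : R} (ha : p.IsRoot a)
    (ha' : (derivative p).IsRoot a) : p.roots.toFinset.card < p.natDegree := by
  have hmult : 1 < p.roots.count a := by
    rw [count_roots]
    exact (one_lt_rootMultiplicity_iff_isRoot hp).mpr ⟨ha, ha'⟩
  have hnodup : ¬p.roots.Nodup := fun h => by
    have := Multiset.nodup_iff_count_le_one.mp h a
    omega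
  exact (lt_of_le_of_ne (Multiset.toFinset_card_le _)
    (mt Multiset.toFinset_card_eq_card_iff_nodup.mp hnodup)).trans_le (card_roots' p)

theorem Finset.sum_le_sum_add_card_compl_mul {ι : Type*} [Fintype ι] [DecidableEq ι]
    (r : ι → ℕ) (s : Finset ι) {m : ℕ} (h : ∀ i, r i ≤ m) :
    ∑ i, r i ≤ ∑ i ∈ s, r i + sᶜ.card * m := by
  rw [← Finset.sum_add_sum_compl s]
  simpa using Finset.sum_le_card_nsmul sᶜ r m fun i _ => h i

namespace MvPolynomial

variable {R σ : Type*} [CommRing R]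

theorem IsHomogeneous.eval_smul {φ : MvPolynomial σ R} {n : ℕ} (hφ : φ.IsHomogeneous n)
    (c : R) (w : σ → R) : eval (c • w) φ = c ^ n * eval w φ := by
  rw [eval_eq, eval_eq, Finset.mul_sum]
  refine Finset.sum_congr rfl fun m hm => ?_
  have hdeg : ∑ i ∈ m.support, m i = n := by
    rw [← hφ (mem_support_iff.mp hm), Finsupp.weight_apply, Finsupp.sum]
    simp
  simp only [Pi.smul_apply, smul_eq_mul, mul_pow, Finset.prod_mul_distrib,
    Finset.prod_pow_eq_pow_sum, hdeg]
  ring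

theorem IsHomogeneous.of_X_mul {φ : MvPolynomial σ R} {n : ℕ} {i : σ}
    (h : (X i * φ).IsHomogeneous n) : φ.IsHomogeneous (n - 1) := by
  intro m hm
  have := h (show coeff (Finsupp.single i 1 + m) (X i * φ) ≠ 0 by rwa [coeff_X_mul])
  simp only [map_add, Finsupp.weight_single, Pi.one_apply, smul_eq_mul, mul_one] at this
  omega

theorem eval_finSuccEquiv_zero {n : ℕ} (p : MvPolynomial (Fin (n + 1)) R) :
    (finSuccEquiv R n p).eval 0 = aeval (Fin.cons 0 X) p := by
  induction p using MvPolynomial.induction_on with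
  | C a => simp [finSuccEquiv_apply]
  | add p q hp hq => simp [hp, hq]
  | mul_X p i hp =>
    rw [map_mul, Polynomial.eval_mul, hp, map_mul]
    congr 1
    cases i using Fin.cases <;> simp [finSuccEquiv_X_zero, finSuccEquiv_X_succ]

theorem X_zero_dvd_of_aeval_cons_zero {n : ℕ} {p : MvPolynomial (Fin (n + 1)) R}
    (h : aeval (Fin.cons 0 X : Fin (n + 1) → MvPolynomial (Fin n) R) p = 0) : X 0 ∣ p := by
  obtain ⟨q, hq⟩ := (Polynomial.X_dvd_iff (f := finSuccEquiv R n p)).mpr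
    (by rw [Polynomial.coeff_zero_eq_eval_zero, eval_finSuccEquiv_zero, h])
  refine ⟨(finSuccEquiv R n).symm q, (finSuccEquiv R n).injective ?_⟩
  rw [map_mul, finSuccEquiv_X_zero, AlgEquiv.apply_symm_apply, hq]

section LinearForm

variable [Fintype σ]

noncomputable def linearForm (ℓ : σ → R) : MvPolynomial σ R := ∑ i, C (ℓ i) * X i

@[simp]
theorem linearForm_zero : linearForm (0 : σ → R) = 0 := by
  simp [linearForm]

theorem eval_linearForm (ℓ w : σ → R) : eval w (linearForm ℓ) = ℓ ⬝ᵥ w := by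
  simp [linearForm, dotProduct]

theorem isHomogeneous_linearForm (ℓ : σ → R) : (linearForm ℓ).IsHomogeneous 1 :=
  IsHomogeneous.sum _ _ _ fun i _ => isHomogeneous_C_mul_X (ℓ i) i

theorem coeff_linearForm [DecidableEq σ] (ℓ : σ → R) (m : σ →₀ ℕ) :
    coeff m (linearForm ℓ) = ∑ i, if Finsupp.single i 1 = m then ℓ i else 0 := by
  simp [linearForm, coeff_sum, coeff_C_mul, coeff_X]

theorem IsHomogeneous.eq_linearForm {φ : MvPolynomial σ R} (hφ : φ.IsHomogeneous 1) :
    φ = linearForm fun i => coeff (Finsupp.single i 1) φ := by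
  classical
  ext m
  rw [coeff_linearForm]
  by_cases hm : ∃ i, Finsupp.single i 1 = m
  · obtain ⟨i, rfl⟩ := hm
    simp [Finsupp.single_left_inj one_ne_zero]
  · push Not at hm
    simp only [hm, if_false, Finset.sum_const_zero]
    by_contra h
    have := hφ h
    rw [Finsupp.weight_apply] at this
    obtain ⟨i, rfl⟩ := (Finsupp.sum_eq_one_iff m).mp (by simpa using this)
    exact hm i rfl

end LinearForm

noncomputable def restrictLine (φ : MvPolynomial σ R) (w u : σ → R) : R[X] :=
  aeval (fun i => Polynomial.C (w i) + Polynomial.C (u i) * Polynomial.X) φ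

theorem eval_restrictLine (φ : MvPolynomial σ R) (w u : σ → R) (t : R) :
    (restrictLine φ w u).eval t = eval (w + t • u) φ := by
  rw [← Polynomial.coe_aeval_eq_eval, restrictLine, ← AlgHom.comp_apply, comp_aeval,
    ← aeval_eq_eval]
  congr 1 with i
  simp
  ring

noncomputable def binaryForm (φ : MvPolynomial σ R) (w u : σ → R) : MvPolynomial (Fin 2) R :=
  aeval (fun i => C (w i) * X 0 + C (u i) * X 1) φ

theorem aeval_X_one_binaryForm (φ : MvPolynomial σ R) (w u : σ → R) :
    aeval ![Polynomial.X, 1] (binaryForm φ w u) = restrictLine φ u w := by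
  rw [binaryForm, ← AlgHom.comp_apply, comp_aeval, restrictLine]
  congr 1
  ext i : 1
  simp [add_comm]

theorem isHomogeneous_binaryForm {φ : MvPolynomial σ R} {n : ℕ} (hφ : φ.IsHomogeneous n)
    (w u : σ → R) : (binaryForm φ w u).IsHomogeneous n := by
  simpa [binaryForm] using hφ.aeval _ fun i =>
    ((isHomogeneous_C_mul_X (w i) 0).add (isHomogeneous_C_mul_X (u i) 1))

theorem rename_swap_binaryForm (φ : MvPolynomial σ R) (w u : σ → R) :
    rename (Equiv.swap 0 1) (binaryForm φ w u) = binaryForm φ u w := by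
  rw [binaryForm, ← AlgHom.comp_apply, comp_aeval, binaryForm]
  congr 1
  ext i : 1
  simp [add_comm]

theorem IsHomogeneous.homogenize_restrictLine {φ : MvPolynomial σ R} {n : ℕ}
    (hφ : φ.IsHomogeneous n) (w u : σ → R) :
    (restrictLine φ u w).homogenize n = binaryForm φ w u :=
  Polynomial.homogenize_eq_of_isHomogeneous (isHomogeneous_binaryForm hφ w u)
    (aeval_X_one_binaryForm φ w u)

theorem IsHomogeneous.coeff_restrictLine_swap {φ : MvPolynomial σ R} {n : ℕ}
    (hφ : φ.IsHomogeneous n) (w u : σ → R) {j : ℕ} (hj : j ≤ n) :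
    (restrictLine φ w u).coeff j = (restrictLine φ u w).coeff (n - j) := by
  have key := coeff_rename_mapDomain (Equiv.swap (0 : Fin 2) 1) (Equiv.injective _)
    (binaryForm φ w u) (Finsupp.single 0 (n - j) + Finsupp.single 1 j)
  rw [rename_swap_binaryForm, ← hφ.homogenize_restrictLine, ← hφ.homogenize_restrictLine,
    Polynomial.coeff_homogenize, Polynomial.coeff_homogenize] at key
  simpa [Finsupp.mapDomain_add, Finsupp.mapDomain_single, Nat.sub_add_cancel hj,
    Nat.add_sub_cancel' hj] using key

theorem IsHomogeneous.natDegree_restrictLine_le {φ : MvPolynomial σ R} {n : ℕ}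
    (hφ : φ.IsHomogeneous n) (w u : σ → R) : (restrictLine φ w u).natDegree ≤ n := by
  rw [← aeval_X_one_binaryForm, (binaryForm φ u w).as_sum, map_sum]
  refine Polynomial.natDegree_sum_le_of_forall_le _ _ fun m hm => ?_
  have hm2 := (isHomogeneous_binaryForm hφ u w) (mem_support_iff.mp hm)
  rw [Finsupp.weight_apply, Finsupp.sum_fintype _ _ (by simp)] at hm2
  simp only [aeval_monomial, Finsupp.prod_fintype _ _ (fun i => pow_zero _), Fin.prod_univ_two]
  simp only [Fin.sum_univ_two, Pi.one_apply, smul_eq_mul] at hm2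
  simp only [Matrix.cons_val_zero, Matrix.cons_val_one, one_pow, mul_one]
  exact (Polynomial.natDegree_C_mul_le _ _).trans
    ((Polynomial.natDegree_X_pow_le _).trans (by omega))

theorem IsHomogeneous.coeff_restrictLine_self {φ : MvPolynomial σ R} {n : ℕ}
    (hφ : φ.IsHomogeneous n) (w u : σ → R) : (restrictLine φ w u).coeff n = eval u φ := by
  rw [hφ.coeff_restrictLine_swap w u le_rfl, Nat.sub_self, Polynomial.coeff_zero_eq_eval_zero,
    eval_restrictLine, zero_smul, add_zero]

theorem IsHomogeneous.natDegree_restrictLine_le_sub_one {φ : MvPolynomial σ R} {n : ℕ}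
    (hφ : φ.IsHomogeneous n) (w : σ → R) {u : σ → R} (hu : eval u φ = 0) :
    (restrictLine φ w u).natDegree ≤ n - 1 := by
  refine Polynomial.natDegree_le_iff_coeff_eq_zero.mpr fun N hN => ?_
  obtain rfl | hlt := eq_or_lt_of_le (show n ≤ N by omega)
  · rw [hφ.coeff_restrictLine_self, hu]
  · exact Polynomial.coeff_eq_zero_of_natDegree_lt
      ((hφ.natDegree_restrictLine_le w u).trans_lt hlt)

section Derivative

variable [Fintype σ]

theorem derivative_aeval [DecidableEq σ] (f : σ → R[X]) (φ : MvPolynomial σ R) :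
    Polynomial.derivative (aeval f φ) =
      ∑ i, aeval f (pderiv i φ) * Polynomial.derivative (f i) := by
  induction φ using MvPolynomial.induction_on with
  | C a => simp
  | add p q hp hq => simp only [map_add, hp, hq, add_mul, Finset.sum_add_distrib]
  | mul_X p j hp =>
    simp only [map_mul, aeval_X, Polynomial.derivative_mul, hp, Derivation.leibniz, pderiv_X,
      smul_eq_mul, map_add, add_mul, Finset.sum_add_distrib, Finset.sum_mul, Pi.single_apply,
      mul_one, mul_zero, apply_ite, map_zero, ite_mul, zero_mul, Finset.sum_ite_eq,
      Finset.mem_univ, if_true]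
    rw [add_comm]
    exact congrArg₂ _ rfl (Finset.sum_congr rfl fun _ _ => by ring)

noncomputable def grad (φ : MvPolynomial σ R) (a : σ → R) : σ → R :=
  fun i => eval a (pderiv i φ)

theorem eval_derivative_restrictLine (φ : MvPolynomial σ R) (w u : σ → R) (t : R) :
    (Polynomial.derivative (restrictLine φ w u)).eval t = u ⬝ᵥ grad φ (w + t • u) := by
  classical
  rw [restrictLine, derivative_aeval, Polynomial.eval_finsetSum, dotProduct]
  refine Finset.sum_congr rfl fun i _ => ?_
  rw [Polynomial.eval_mul, ← restrictLine, eval_restrictLine]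
  simp only [map_add, Polynomial.derivative_C, Polynomial.derivative_C_mul_X, zero_add,
    Polynomial.eval_C, grad]
  exact mul_comm _ _

theorem IsHomogeneous.coeff_restrictLine_pred {φ : MvPolynomial σ R} {n : ℕ}
    (hφ : φ.IsHomogeneous n) (hn : n ≠ 0) (w u : σ → R) :
    (restrictLine φ w u).coeff (n - 1) = w ⬝ᵥ grad φ u := by
  have h := eval_derivative_restrictLine φ u w 0
  rw [zero_smul, add_zero, ← Polynomial.coeff_zero_eq_eval_zero,
    Polynomial.coeff_derivative] at h
  rw [hφ.coeff_restrictLine_swap w u (Nat.sub_le n 1),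
    Nat.sub_sub_self (Nat.one_le_iff_ne_zero.mpr hn)]
  simpa using h

theorem IsHomogeneous.dotProduct_grad_self {φ : MvPolynomial σ R} {n : ℕ}
    (hφ : φ.IsHomogeneous n) (a : σ → R) : a ⬝ᵥ grad φ a = n * eval a φ := by
  simpa [dotProduct, grad, nsmul_eq_mul] using congrArg (eval a) hφ.sum_X_mul_pderiv

theorem IsHomogeneous.natDegree_restrictLine_le_sub_two {φ : MvPolynomial σ R} {n : ℕ}
    (hφ : φ.IsHomogeneous n) (hn : n ≠ 0) {w u : σ → R} (hu : eval u φ = 0)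
    (hwu : w ⬝ᵥ grad φ u = 0) : (restrictLine φ w u).natDegree ≤ n - 2 := by
  refine Polynomial.natDegree_le_iff_coeff_eq_zero.mpr fun N hN => ?_
  obtain rfl | hlt := eq_or_lt_of_le (show n - 1 ≤ N by omega)
  · rw [hφ.coeff_restrictLine_pred hn, hwu]
  · exact Polynomial.coeff_eq_zero_of_natDegree_lt
      ((hφ.natDegree_restrictLine_le_sub_one w hu).trans_lt hlt)

end Derivative

end MvPolynomial

theorem MvPolynomial.aeval_pow_card {F E σ : Type*} [Field F] [Fintype F] [CommRing E]
    [Algebra F E] (φ : MvPolynomial σ F) (v : σ → E) :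
    aeval (fun i => v i ^ Fintype.card F) φ = aeval v φ ^ Fintype.card F := by
  simpa [FiniteField.coe_frobeniusAlgHom] using
    (congrArg (· φ) (comp_aeval (f := v) (FiniteField.frobeniusAlgHom F E))).symm

namespace PlaneCurve

open MvPolynomial Projectivization
open scoped LinearAlgebra.Projectivization Matrix

variable {F : Type*} [Field F]

def points (φ : MvPolynomial (Fin 3) F) : Set (ℙ F (Fin 3 → F)) := {x | eval x.rep φ = 0}

theorem mem_points_mk {φ : MvPolynomial (Fin 3) F} {d : ℕ} (hφ : φ.IsHomogeneous d)
    {w : Fin 3 → F} (hw : w ≠ 0) : mk F w hw ∈ points φ ↔ eval w φ = 0 := by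
  obtain ⟨a, ha⟩ := (mk_eq_mk_iff F _ _ (rep_nonzero _) hw).mp (mk_rep (mk F w hw))
  rw [points, Set.mem_ofPred_eq, ← ha, Units.smul_def, hφ.eval_smul, mul_eq_zero,
    or_iff_right (pow_ne_zero _ a.ne_zero)]

theorem points_mul (φ ψ : MvPolynomial (Fin 3) F) : points (φ * ψ) = points φ ∪ points ψ := by
  ext x
  simp [points]

def ContainsLine (φ : MvPolynomial (Fin 3) F) : Prop :=
  ∃ w u : Fin 3 → F, LinearIndependent F ![w, u] ∧ restrictLine φ w u = 0

theorem ContainsLine.exists_linearForm_mul {φ : MvPolynomial (Fin 3) F} {d : ℕ}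
    (hline : ContainsLine φ) (hφ : φ.IsHomogeneous d) :
    ∃ ℓ : Fin 3 → F, ℓ ≠ 0 ∧ ∃ ψ : MvPolynomial (Fin 3) F,
      ψ.IsHomogeneous (d - 1) ∧ φ = linearForm ℓ * ψ := by
  obtain ⟨w, u, hwu, hzero⟩ := hline
  obtain ⟨c, hc⟩ := exists_linearIndependent_cons_of_lt_finrank
    (LinearIndependent.pair_symm_iff.mp hwu) (show 2 < Module.finrank F (Fin 3 → F) by simp)
  -- the columns of `T` are `c, u, w`, so `φ' (0, s, t) = φ (s • u + t • w)`
  set T : Matrix (Fin 3) (Fin 3) F := (Matrix.of ![c, u, w])ᵀ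
  have hT : IsUnit T := Matrix.linearIndependent_cols_iff_isUnit.mp hc
  set φ' := bind₁ T.toMvPolynomial φ
  have hφ' : φ'.IsHomogeneous d := by
    simpa using hφ.aeval _ (Matrix.toMvPolynomial_isHomogeneous T)
  have hrestrict :
      aeval (Fin.cons 0 X : Fin 3 → MvPolynomial (Fin 2) F) φ' = binaryForm φ u w := by
    have hsubst : (fun i => aeval (Fin.cons 0 X : Fin 3 → MvPolynomial (Fin 2) F)
        (T.toMvPolynomial i)) = fun i => C (u i) * X 0 + C (w i) * X 1 := by
      funext i
      simp [T, Matrix.toMvPolynomial, Fin.sum_univ_three, ← C_mul_X_eq_monomial]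
      exact Or.inl rfl
    rw [aeval_bind₁, hsubst, binaryForm]
  obtain ⟨H, hH⟩ := X_zero_dvd_of_aeval_cons_zero (by
    rw [hrestrict, ← hφ.homogenize_restrictLine, hzero, Polynomial.homogenize_zero])
  have hφT : φ = bind₁ T⁻¹.toMvPolynomial φ' := by
    simp only [φ', bind₁_bind₁, ← Matrix.toMvPolynomial_mul, Matrix.mul_nonsing_inv _
      ((Matrix.isUnit_iff_isUnit_det T).mp hT), Matrix.toMvPolynomial_one, bind₁_X_left,
      AlgHom.id_apply]
  refine ⟨T⁻¹ 0, fun h => ?_, bind₁ T⁻¹.toMvPolynomial H, ?_, ?_⟩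
  · have := congrFun (congrFun (Matrix.nonsing_inv_mul T
      ((Matrix.isUnit_iff_isUnit_det T).mp hT)) 0) 0
    simp [Matrix.mul_apply, h] at this
  · have hHd : H.IsHomogeneous (d - 1) := (hH ▸ hφ').of_X_mul
    simpa using hHd.aeval _ (Matrix.toMvPolynomial_isHomogeneous T⁻¹)
  · rw [hφT, hH, map_mul, bind₁_X_right]
    congr 1
    simp [Matrix.toMvPolynomial, linearForm, C_mul_X_eq_monomial]

/-- `Option F` parametrizes the lines through `b 0` by their directions. -/
def pencilDir (b : Fin 3 → Fin 3 → F) : Option F → Fin 3 → F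
  | none => b 2
  | some c => b 1 + c • b 2

theorem exists_pencilDir_dotProduct_eq_zero (b : Fin 3 → Fin 3 → F) (G : Fin 3 → F) :
    ∃ o, pencilDir b o ⬝ᵥ G = 0 := by
  by_cases h : b 2 ⬝ᵥ G = 0
  · exact ⟨none, h⟩
  · refine ⟨some (-(b 1 ⬝ᵥ G) / (b 2 ⬝ᵥ G)), ?_⟩
    simp only [pencilDir, add_dotProduct, smul_dotProduct, smul_eq_mul]
    field_simp
    ring

variable {b : Fin 3 → Fin 3 → F}

theorem linearIndependent_pencilDir (hb : LinearIndependent F b) (o : Option F) :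
    LinearIndependent F ![pencilDir b o, b 0] := by
  rw [LinearIndependent.pair_iff]
  intro s t hst
  have key := Fintype.linearIndependent_iff.mp hb
  cases o with
  | none =>
    have := key ![t, 0, s] (by simpa [pencilDir, Fin.sum_univ_three, add_comm] using hst)
    exact ⟨this 2, this 0⟩
  | some c =>
    have := key ![t, s, s * c] (by
      simp only [pencilDir] at hst
      simp only [Fin.sum_univ_three, Matrix.cons_val_zero, Matrix.cons_val_one,
        Matrix.cons_val_two, Matrix.head_cons, Matrix.tail_cons]
      rw [← hst]
      module)
    exact ⟨this 1, this 0⟩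

theorem pencilDir_add_smul_ne_zero (hb : LinearIndependent F b) (o : Option F) (t : F) :
    pencilDir b o + t • b 0 ≠ 0 := fun h =>
  one_ne_zero (LinearIndependent.pair_iff.mp (linearIndependent_pencilDir hb o) 1 t
    (by rwa [one_smul])).1

theorem exists_eq_mk_pencilDir (hb : LinearIndependent F b) {y : ℙ F (Fin 3 → F)}
    (hy : y ≠ mk F (b 0) (hb.ne_zero 0)) :
    ∃ o t, y = mk F (pencilDir b o + t • b 0) (pencilDir_add_smul_ne_zero hb o t) := by
  have hspan := hb.span_eq_top_of_card_eq_finrank (by simp)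
  obtain ⟨c, hc⟩ := (Submodule.mem_span_range_iff_exists_fun F).mp
    (hspan ▸ Submodule.mem_top : y.rep ∈ Submodule.span F (Set.range b))
  rw [Fin.sum_univ_three] at hc
  rw [← mk_rep y]
  by_cases h1 : c 1 = 0
  · by_cases h2 : c 2 = 0
    · refine absurd ?_ hy
      rw [← mk_rep y, mk_eq_mk_iff']
      exact ⟨c 0, by rw [← hc, h1, h2]; simp⟩
    · refine ⟨none, c 0 / c 2, (mk_eq_mk_iff' _ _ _ _ _).mpr ⟨c 2, ?_⟩⟩
      rw [← hc, h1, pencilDir]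
      match_scalars <;> field_simp
  · refine ⟨some (c 2 / c 1), c 0 / c 1, (mk_eq_mk_iff' _ _ _ _ _).mpr ⟨c 1, ?_⟩⟩
    rw [← hc, pencilDir]
    match_scalars <;> field_simp

theorem exists_linearIndependent_fin_three {w : Fin 3 → F} (hw : w ≠ 0) :
    ∃ b : Fin 3 → Fin 3 → F, LinearIndependent F b ∧ b 0 = w := by
  obtain ⟨u, hu⟩ := exists_linearIndependent_pair_of_one_lt_finrank (R := F) (by simp) hw
  obtain ⟨c, hc⟩ := exists_linearIndependent_snoc_of_lt_finrank hu (by simp)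
  exact ⟨_, hc, rfl⟩

section Count

variable [DecidableEq F]

/-- The number of points of `φ = 0`, other than `b 0`, on the line through `b 0` with direction
`pencilDir b o`. -/
noncomputable def pencilCount (φ : MvPolynomial (Fin 3) F) (b : Fin 3 → Fin 3 → F) (o : Option F) :
    ℕ :=
  (restrictLine φ (pencilDir b o) (b 0)).roots.toFinset.card

theorem pencilCount_le_natDegree (φ : MvPolynomial (Fin 3) F) (b : Fin 3 → Fin 3 → F)
    (o : Option F) : pencilCount φ b o ≤ (restrictLine φ (pencilDir b o) (b 0)).natDegree :=
  (Multiset.toFinset_card_le _).trans (Polynomial.card_roots' _)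

variable [Fintype F]

theorem ncard_points_le_one_add_sum {φ : MvPolynomial (Fin 3) F} {d : ℕ}
    (hφ : φ.IsHomogeneous d) (hline : ¬ContainsLine φ) (hb : LinearIndependent F b) :
    (points φ).ncard ≤ 1 + ∑ o, pencilCount φ b o := by
  classical
  let pt : Option F → F → ℙ F (Fin 3 → F) := fun o t =>
    mk F (pencilDir b o + t • b 0) (pencilDir_add_smul_ne_zero hb o t)
  let S := insert (mk F (b 0) (hb.ne_zero 0)) (Finset.univ.biUnion fun o =>
    (restrictLine φ (pencilDir b o) (b 0)).roots.toFinset.image (pt o))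
  have hsub : points φ ⊆ S := by
    intro y hy
    by_cases hy0 : y = mk F (b 0) (hb.ne_zero 0)
    · simp [S, hy0]
    obtain ⟨o, t, rfl⟩ := exists_eq_mk_pencilDir hb hy0
    have hne : restrictLine φ (pencilDir b o) (b 0) ≠ 0 := fun h =>
      hline ⟨_, _, linearIndependent_pencilDir hb o, h⟩
    rw [mem_points_mk hφ, ← eval_restrictLine] at hy
    simp only [S, Finset.coe_insert, Finset.coe_biUnion, Finset.coe_image, Set.mem_insert_iff,
      Set.mem_iUnion, Set.mem_image, Finset.mem_coe, Multiset.mem_toFinset]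
    exact Or.inr ⟨o, Finset.mem_univ _, t, (Polynomial.mem_roots hne).mpr hy, rfl⟩
  calc (points φ).ncard ≤ S.card := by
        simpa using Set.ncard_le_ncard hsub (Finset.finite_toSet S)
    _ ≤ 1 + ∑ o, pencilCount φ b o := by
        refine (Finset.card_insert_le _ _).trans ?_
        rw [add_comm]
        exact add_le_add_right (Finset.card_biUnion_le.trans
          (Finset.sum_le_sum fun o _ => Finset.card_image_le)) 1

theorem ncard_points_le_add_mul {φ : MvPolynomial (Fin 3) F} {d : ℕ}
    (hφ : φ.IsHomogeneous d) (hline : ¬ContainsLine φ) (hb : LinearIndependent F b)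
    (h0 : eval (b 0) φ = 0) (s : Finset (Option F)) :
    (points φ).ncard ≤
      1 + ∑ o ∈ s, pencilCount φ b o + (Fintype.card F + 1 - s.card) * (d - 1) := by
  have hsum := Finset.sum_le_sum_add_card_compl_mul (pencilCount φ b) s fun o =>
    (pencilCount_le_natDegree φ b o).trans (hφ.natDegree_restrictLine_le_sub_one _ h0)
  rw [Finset.card_compl, Fintype.card_option] at hsum
  have := ncard_points_le_one_add_sum hφ hline hb
  omega

end Count

section Bounds

variable [Fintype F]

theorem ncard_points_le {φ : MvPolynomial (Fin 3) F} {d : ℕ} (hd : 2 ≤ d)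
    (hφ : φ.IsHomogeneous d) (hline : ¬ContainsLine φ) :
    (points φ).ncard ≤ (d - 1) * (Fintype.card F + 1) := by
  classical
  obtain hempty | ⟨x, hx⟩ := (points φ).eq_empty_or_nonempty
  · simp [hempty]
  obtain ⟨b, hb, hbx⟩ := exists_linearIndependent_fin_three x.rep_nonzero
  have h0 : eval (b 0) φ = 0 := hbx ▸ hx
  obtain ⟨o, ho⟩ := exists_pencilDir_dotProduct_eq_zero b (grad φ (b 0))
  have htangent := (pencilCount_le_natDegree φ b o).trans
    (hφ.natDegree_restrictLine_le_sub_two (by omega) h0 ho)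
  have := ncard_points_le_add_mul hφ hline hb h0 {o}
  rw [Finset.sum_singleton, Finset.card_singleton, Nat.add_sub_cancel] at this
  rw [Nat.mul_succ, Nat.mul_comm]
  omega

theorem ncard_points_lt_of_tangent_transversal {φ : MvPolynomial (Fin 3) F} {d : ℕ}
    (hd : 2 ≤ d) (hφ : φ.IsHomogeneous d) (hline : ¬ContainsLine φ) {x y : Fin 3 → F}
    (hxy : LinearIndependent F ![y, x]) (hx : eval x φ = 0) (hy : eval y φ = 0)
    (htx : y ⬝ᵥ grad φ x = 0) (hty : x ⬝ᵥ grad φ y ≠ 0) :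
    (points φ).ncard < (d - 1) * (Fintype.card F + 1) := by
  classical
  obtain ⟨w, hw⟩ := exists_linearIndependent_snoc_of_lt_finrank hxy (by simp)
  set b : Fin 3 → Fin 3 → F := Fin.snoc ![y, x] w
  have hb0 : b 0 = y := rfl
  have hdir : pencilDir b (some 0) = x := by simp [pencilDir, b]
  obtain ⟨o, ho⟩ := exists_pencilDir_dotProduct_eq_zero b (grad φ y)
  have hne : o ≠ some 0 := by
    rintro rfl
    exact hty (hdir ▸ ho)
  have htangent : pencilCount φ b o ≤ d - 2 := (pencilCount_le_natDegree φ b o).trans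
    (hφ.natDegree_restrictLine_le_sub_two (by omega) hy ho)
  -- the line `yx` is tangent at `x`, so `0` is a multiple root of `t ↦ φ (x + t • y)`
  have hsecant : pencilCount φ b (some 0) ≤ d - 2 := by
    have hQ : restrictLine φ x y ≠ 0 := fun h =>
      hline ⟨x, y, LinearIndependent.pair_symm_iff.mp hxy, h⟩
    have hlt := Polynomial.card_roots_toFinset_lt_natDegree hQ (a := 0)
      (by simp [eval_restrictLine, hx]) (by simp [eval_derivative_restrictLine, htx])
    have hdeg := hφ.natDegree_restrictLine_le_sub_one x hy
    rw [pencilCount, hdir, hb0]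
    omega
  have hcount := ncard_points_le_add_mul hφ hline hw hy {o, some 0}
  rw [Finset.sum_pair hne, Finset.card_pair hne] at hcount
  obtain ⟨r, hr⟩ := Nat.exists_eq_add_of_le' (Fintype.card_pos (α := F))
  rw [hr, show r + 1 + 1 - 2 = r by omega] at hcount
  rw [hr, show r + 1 + 1 = r + 2 by omega, Nat.mul_add, Nat.mul_comm]
  omega

theorem exists_tangent_transversal {φ : MvPolynomial (Fin 3) F} {d : ℕ} (hd : 3 ≤ d)
    (hφ : φ.IsHomogeneous d) (hline : ¬ContainsLine φ)
    (hN : (d - 1) * (Fintype.card F + 1) ≤ (points φ).ncard) :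
    ∃ x y : Fin 3 → F, LinearIndependent F ![y, x] ∧ eval x φ = 0 ∧ eval y φ = 0 ∧
      y ⬝ᵥ grad φ x = 0 ∧ x ⬝ᵥ grad φ y ≠ 0 := by
  classical
  rw [Nat.mul_succ, Nat.mul_comm] at hN
  obtain ⟨p, hp⟩ := Set.nonempty_of_ncard_ne_zero (s := points φ) (by omega)
  obtain ⟨b, hb, hbp⟩ := exists_linearIndependent_fin_three p.rep_nonzero
  have hx : eval (b 0) φ = 0 := hbp ▸ hp
  obtain ⟨o, ho⟩ := exists_pencilDir_dotProduct_eq_zero b (grad φ (b 0))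
  set P := restrictLine φ (pencilDir b o) (b 0) with hPdef
  have hP : P ≠ 0 := fun h => hline ⟨_, _, linearIndependent_pencilDir hb o, h⟩
  have hdeg : P.natDegree ≤ d - 2 := hφ.natDegree_restrictLine_le_sub_two (by omega) hx ho
  -- equality forces `d - 2` distinct roots on the tangent at `b 0`, so all of them are simple
  have hcard : d - 2 ≤ P.roots.toFinset.card := by
    have := ncard_points_le_add_mul hφ hline hb hx {o}
    rw [Finset.sum_singleton, Finset.card_singleton, Nat.add_sub_cancel, pencilCount,
      ← hPdef] at this
    omega
  obtain ⟨c, hc⟩ := Finset.card_pos.mp (show 0 < P.roots.toFinset.card by omega)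
  have hroot : P.IsRoot c := (Polynomial.mem_roots hP).mp (Multiset.mem_toFinset.mp hc)
  refine ⟨b 0, pencilDir b o + c • b 0, ?_, hx, ?_, ?_, ?_⟩
  · exact (LinearIndependent.pair_add_smul_left_iff c).mpr (linearIndependent_pencilDir hb o)
  · rwa [← eval_restrictLine]
  · rw [add_dotProduct, smul_dotProduct, ho, hφ.dotProduct_grad_self, hx]
    simp
  · rw [← eval_derivative_restrictLine]
    exact fun h => absurd (Polynomial.card_roots_toFinset_lt_natDegree hP hroot h) (by omega)

theorem ncard_points_lt {φ : MvPolynomial (Fin 3) F} {d : ℕ} (hd : 3 ≤ d)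
    (hφ : φ.IsHomogeneous d) (hline : ¬ContainsLine φ) :
    (points φ).ncard < (d - 1) * (Fintype.card F + 1) := by
  by_contra! hN
  obtain ⟨x, y, hxy, hx, hy, htx, hty⟩ := exists_tangent_transversal hd hφ hline hN
  exact hN.not_gt (ncard_points_lt_of_tangent_transversal (by omega) hφ hline hxy hx hy htx hty)

end Bounds

section Lines

theorem mem_points_linearForm_mk {ℓ w : Fin 3 → F} (hw : w ≠ 0) :
    mk F w hw ∈ points (linearForm ℓ) ↔ ℓ ⬝ᵥ w = 0 := by
  rw [mem_points_mk (isHomogeneous_linearForm ℓ), eval_linearForm]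

theorem points_linearForm_inter_nonempty (ℓ₁ ℓ₂ : Fin 3 → F) :
    (points (linearForm ℓ₁) ∩ points (linearForm ℓ₂)).Nonempty := by
  obtain ⟨w, hw, hw0⟩ := Submodule.exists_mem_ne_zero_of_ne_bot
    (LinearMap.ker_ne_bot_of_finrank_lt (f := (Matrix.of ![ℓ₁, ℓ₂]).mulVecLin) (by simp))
  have hw' := congrFun (LinearMap.mem_ker.mp hw)
  exact ⟨mk F w hw0, (mem_points_linearForm_mk hw0).mpr (hw' 0),
    (mem_points_linearForm_mk hw0).mpr (hw' 1)⟩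

variable [Fintype F]

theorem ncard_points_linearForm_le {ℓ : Fin 3 → F} (hℓ : ℓ ≠ 0) :
    (points (linearForm ℓ)).ncard ≤ Fintype.card F + 1 := by
  set f : Module.Dual F (Fin 3 → F) := dotProductEquiv F (Fin 3) ℓ
  have hf : f ≠ 0 := (LinearEquiv.map_ne_zero_iff _).mpr hℓ
  have hK : Module.finrank F (LinearMap.ker f) = 2 := by
    have := Module.Dual.finrank_ker_add_one_of_ne_zero hf
    simp at this
    omega
  set ι := map (LinearMap.ker f).subtype (LinearMap.ker f).injective_subtype with hι
  have hsub : points (linearForm ℓ) ⊆ Set.range ι := by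
    intro x hx
    have hker : x.rep ∈ LinearMap.ker f := by simpa [f, points, eval_linearForm] using hx
    refine ⟨mk F ⟨x.rep, hker⟩ (fun h => x.rep_nonzero (congrArg Subtype.val h)), ?_⟩
    rw [hι, map_mk]
    exact mk_rep x
  calc (points (linearForm ℓ)).ncard ≤ (Set.range ι).ncard := Set.ncard_le_ncard hsub
    _ = Fintype.card F + 1 := by
      rw [Set.ncard_range_of_injective (Projectivization.map_injective _ _),
        card_of_finrank_two F _ hK, Nat.card_eq_fintype_card]

theorem ncard_points_linearForm_union_le {ℓ₁ ℓ₂ : Fin 3 → F} (hℓ₁ : ℓ₁ ≠ 0) (hℓ₂ : ℓ₂ ≠ 0) :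
    (points (linearForm ℓ₁) ∪ points (linearForm ℓ₂)).ncard ≤ 2 * Fintype.card F + 1 := by
  have hinter := (Set.ncard_pos (Set.toFinite _)).mpr (points_linearForm_inter_nonempty ℓ₁ ℓ₂)
  have := Set.ncard_union_add_ncard_inter (points (linearForm ℓ₁)) (points (linearForm ℓ₂))
  have := ncard_points_linearForm_le hℓ₁
  have := ncard_points_linearForm_le hℓ₂
  omega

end Lines

section DegreeThreePoint

variable [Fintype F] {E : Type*} [Field E] [Algebra F E] {v : Fin 3 → E}

theorem aeval_linearForm_ne_zero
    (hv : LinearIndependent E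
      ![v, fun i => v i ^ Fintype.card F, fun i => v i ^ Fintype.card F ^ 2])
    {ℓ : Fin 3 → F} (hℓ : ℓ ≠ 0) : aeval v (linearForm ℓ) ≠ 0 := by
  intro h0
  set q := Fintype.card F
  have h1 : aeval (fun i => v i ^ q) (linearForm ℓ) = 0 := by
    rw [aeval_pow_card, h0, zero_pow Fintype.card_ne_zero]
  have h2 : aeval (fun i => v i ^ q ^ 2) (linearForm ℓ) = 0 := by
    simpa [← pow_mul, sq, h1, Fintype.card_ne_zero] using
      aeval_pow_card (linearForm ℓ) fun i => v i ^ q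
  set f : Module.Dual E (Fin 3 → E) := dotProductEquiv E (Fin 3) (algebraMap F E ∘ ℓ)
  have hf : ∀ w, f w = aeval w (linearForm ℓ) := fun w => by
    simp [f, linearForm, dotProduct]
  have hf0 : f = 0 :=
    LinearMap.ext_on_range (hv.span_eq_top_of_card_eq_finrank (by simp)) fun i => by
      fin_cases i <;> simp [hf, h0, h1, h2]
  refine hℓ (funext fun i => (algebraMap F E).injective ?_)
  simpa [f] using
    congrFun ((dotProductEquiv E (Fin 3)).injective (hf0.trans (map_zero _).symm)) i

theorem aeval_eq_zero_of_linearForm_mul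
    (hv : LinearIndependent E
      ![v, fun i => v i ^ Fintype.card F, fun i => v i ^ Fintype.card F ^ 2])
    {ℓ : Fin 3 → F} (hℓ : ℓ ≠ 0) {ψ : MvPolynomial (Fin 3) F}
    (h : aeval v (linearForm ℓ * ψ) = 0) : aeval v ψ = 0 :=
  (mul_eq_zero.mp ((map_mul _ _ _).symm.trans h)).resolve_left (aeval_linearForm_ne_zero hv hℓ)

theorem not_containsLine_of_aeval_eq_zero
    (hv : LinearIndependent E
      ![v, fun i => v i ^ Fintype.card F, fun i => v i ^ Fintype.card F ^ 2])
    {φ : MvPolynomial (Fin 3) F} (hφ : φ.IsHomogeneous 2) (hφ0 : φ ≠ 0) (hφv : aeval v φ = 0) :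
    ¬ContainsLine φ := by
  intro hline
  obtain ⟨ℓ, hℓ, ψ, hψ, rfl⟩ := hline.exists_linearForm_mul hφ
  have hψv := aeval_eq_zero_of_linearForm_mul hv hℓ hφv
  rw [hψ.eq_linearForm] at hψv hφ0
  refine aeval_linearForm_ne_zero hv (fun h => hφ0 ?_) hψv
  rw [h, linearForm_zero, mul_zero]

end DegreeThreePoint

end PlaneCurve

open MvPolynomial PlaneCurve

theorem stmt_13_general (q : ℕ)
    (F E : Type) [Field F] [Fintype F] [Field E] [Algebra F E]
    (hF : Fintype.card F = q)
    -- `v` represents a degree-3 closed point of `P²`: its three Frobenius conjugates are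
    -- pairwise distinct and non-collinear (equivalently, linearly independent).
    (v : Fin 3 → E)
    (hv : LinearIndependent E ![v, fun i => v i ^ q, fun i => v i ^ q ^ 2]) :
    ∀ f : MvPolynomial (Fin 3) F, f ≠ 0 → f.IsHomogeneous 4 →
      MvPolynomial.aeval v f = 0 →
      {x : Projectivization F (Fin 3 → F) | MvPolynomial.eval x.rep f = 0}.ncard ≤ 3 * q + 2 := by
  subst hF
  intro f hf0 hf hfv
  change (points f).ncard ≤ _
  by_cases hline₁ : ContainsLine f
  swap
  · have := ncard_points_lt (by norm_num) hf hline₁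
    omega
  obtain ⟨ℓ₁, hℓ₁, g, hg, rfl⟩ := hline₁.exists_linearForm_mul hf
  have hgv := aeval_eq_zero_of_linearForm_mul hv hℓ₁ hfv
  rw [points_mul]
  by_cases hline₂ : ContainsLine g
  swap
  · have := ncard_points_lt le_rfl hg hline₂
    have := ncard_points_linearForm_le hℓ₁
    have := Set.ncard_union_le (points (linearForm ℓ₁)) (points g)
    omega
  obtain ⟨ℓ₂, hℓ₂, h, hh, rfl⟩ := hline₂.exists_linearForm_mul hg
  have hhv := aeval_eq_zero_of_linearForm_mul hv hℓ₂ hgv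
  have hh0 : h ≠ 0 := by
    rintro rfl
    simp at hf0
  rw [points_mul, ← Set.union_assoc]
  have := ncard_points_le le_rfl hh (not_containsLine_of_aeval_eq_zero hv hh hh0 hhv)
  have := ncard_points_linearForm_union_le hℓ₁ hℓ₂
  have := Set.ncard_union_le (points (linearForm ℓ₁) ∪ points (linearForm ℓ₂)) (points h)
  omega

/-- For `q ≥ 4`, a plane quartic over `F_q` passing through a degree-3 closed point not on
any `F_q`-rational line has at most `3q + 2` rational points. -/
theorem stmt_13 (q : ℕ) (hq : IsPrimePow q) (hq4 : 4 ≤ q)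
    (F E : Type) [Field F] [Fintype F] [Field E] [Fintype E] [Algebra F E]
    (hF : Fintype.card F = q) (hE : Fintype.card E = q ^ 3)
    -- `v` represents a degree-3 closed point of `P²`: its three Frobenius conjugates are
    -- pairwise distinct and non-collinear (equivalently, linearly independent).
    (v : Fin 3 → E)
    (hv : LinearIndependent E ![v, fun i => v i ^ q, fun i => v i ^ q ^ 2]) :
    ∀ f : MvPolynomial (Fin 3) F, f ≠ 0 → f.IsHomogeneous 4 →
      MvPolynomial.aeval v f = 0 →
      {x : Projectivization F (Fin 3 → F) | MvPolynomial.eval x.rep f = 0}.ncard ≤ 3 * q + 2 :=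
  stmt_13_general q F E hF v hv
end
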